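/- Assume the Bézier surface b is regular. Then the tangent and normal directions of the control surfaces converge to those of b under subdivision: for every ε > 0 there exists K such that for every k ≥ K, every closed dyadic subsquare S of side 2^{−k}, every triangle T of the level-k control surface l_k whose parameter triangle lies in S, and every (u,v) ∈ S, the angle between the unit normal of the plane of T (oriented via the counterclockwise order of its parameter vertices) and the unit normal (b_u × b_v)/‖b_u × b_v‖ of b at (u,v) is less than ε, and the angle between each edge of T joining vertices adjacent in the u-parameter direction (resp. v-parameter direction) and b_u(u,v) (resp. b_v(u,v)) is less than ε. -/

import Mathlib

noncomputable section
open Finset Filter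

/-- Points of `ℝ³` with the Euclidean norm. -/
abbrev E3 : Type := EuclideanSpace ℝ (Fin 3)

/-- The Bernstein polynomial `B_i^n(t) = C(n,i) tⁱ (1-t)^(n-i)`. -/
def bern (n i : ℕ) (t : ℝ) : ℝ := (n.choose i : ℝ) * t ^ i * (1 - t) ^ (n - i)

/-- The Bézier surface of the control net `p` with degrees `n, m`. -/
def bez (n m : ℕ) (p : ℕ → ℕ → E3) (u v : ℝ) : E3 :=
  ∑ i ∈ Finset.range (n + 1), ∑ j ∈ Finset.range (m + 1),
    (bern n i u * bern m j v) • p i j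

/-- The parameter square `[0,1] × [0,1]`. -/
def unitSq : Set (ℝ × ℝ) := Set.Icc 0 1 ×ˢ Set.Icc 0 1

/-- The partial derivative `b_u` of the Bézier surface. -/
def bezU (n m : ℕ) (p : ℕ → ℕ → E3) (u v : ℝ) : E3 :=
  deriv (fun u' => bez n m p u' v) u

/-- The partial derivative `b_v` of the Bézier surface. -/
def bezV (n m : ℕ) (p : ℕ → ℕ → E3) (u v : ℝ) : E3 :=
  deriv (fun v' => bez n m p u v') v

/-- The Bézier surface is regular: `b_u, b_v` are linearly independent on `[0,1]²`. -/
def Regular (n m : ℕ) (p : ℕ → ℕ → E3) : Prop :=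
  ∀ u ∈ Set.Icc (0:ℝ) 1, ∀ v ∈ Set.Icc (0:ℝ) 1,
    LinearIndependent ℝ ![bezU n m p u v, bezV n m p u v]

/-- The triangle-wise affine control surface of a net `p` (degrees `n,m`),
parametrized over `[0,1]²`: on the cell `[i/n,(i+1)/n] × [j/m,(j+1)/m]`, the lower
parameter triangle (with vertices `(i/n,j/m), ((i+1)/n,j/m), ((i+1)/n,(j+1)/m)`) is mapped
affinely to the triangle `p i j, p (i+1) j, p (i+1) (j+1)`, and the upper parameter triangle
(with vertices `(i/n,j/m), (i/n,(j+1)/m), ((i+1)/n,(j+1)/m)`) is mapped affinely to the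
triangle `p i j, p i (j+1), p (i+1) (j+1)`. -/
def ctrlSurf (n m : ℕ) (p : ℕ → ℕ → E3) (u v : ℝ) : E3 :=
  let i : ℕ := min ⌊u * n⌋₊ (n - 1)
  let j : ℕ := min ⌊v * m⌋₊ (m - 1)
  let s : ℝ := u * n - i
  let t : ℝ := v * m - j
  if t ≤ s then (1 - s) • p i j + (s - t) • p (i + 1) j + t • p (i + 1) (j + 1)
  else (1 - t) • p i j + (t - s) • p i (j + 1) + s • p (i + 1) (j + 1)

/-- The de Casteljau midpoint points: `dcPt q r i = b_i^r`, where `b_i^0 = q i` and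
`b_i^r = (b_i^(r-1) + b_(i+1)^(r-1)) / 2`. -/
def dcPt (q : ℕ → E3) : ℕ → ℕ → E3
  | 0, i => q i
  | r + 1, i => ((2:ℝ)⁻¹) • (dcPt q r i + dcPt q r (i + 1))

/-- One de Casteljau midpoint subdivision step on a list of `N+1` control points: for
`side = 0` the left list `(b_0^0, …, b_0^N)`, otherwise the right list
`(b_0^N, b_1^(N-1), …, b_N^0)`. -/
def dcHalf (N : ℕ) (q : ℕ → E3) (side : ℕ) (i : ℕ) : E3 :=
  if side = 0 then dcPt q i 0 else dcPt q (N - i) i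

/-- One subdivision step of a control net: the de Casteljau step applied to every row
(`u`-direction) and then to every column (`v`-direction); `(a, b) ∈ {0,1}²` selects one of
the four resulting `(n+1) × (m+1)` nets (the net of the subsquare with lower-left corner
`(a/2, b/2)`). -/
def subNet (n m : ℕ) (p : ℕ → ℕ → E3) (a b : ℕ) (i j : ℕ) : E3 :=
  dcHalf m (fun j' => dcHalf n (fun i' => p i' j') a i) b j

/-- The level-`k` nets produced by `k` iterations of subdivision: `levelNet n m p k r s` is
the control net associated to the closed dyadic subsquare
`[r/2ᵏ, (r+1)/2ᵏ] × [s/2ᵏ, (s+1)/2ᵏ]` of side `2⁻ᵏ`. -/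
def levelNet (n m : ℕ) (p : ℕ → ℕ → E3) : ℕ → ℕ → ℕ → (ℕ → ℕ → E3)
  | 0, _, _ => p
  | k + 1, r, s => subNet n m (levelNet n m p k (r / 2) (s / 2)) (r % 2) (s % 2)

/-- The level-`k` control surface `l_k : [0,1]² → ℝ³`: on each closed dyadic subsquare of
side `2⁻ᵏ` it is the triangle-wise affine control surface of the corresponding level-`k`
net, carried out over that subsquare. -/
def ctrlSurfK (n m : ℕ) (p : ℕ → ℕ → E3) (k : ℕ) (u v : ℝ) : E3 :=
  let r : ℕ := min ⌊u * 2 ^ k⌋₊ (2 ^ k - 1)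
  let s : ℕ := min ⌊v * 2 ^ k⌋₊ (2 ^ k - 1)
  ctrlSurf n m (levelNet n m p k r s) (u * 2 ^ k - r) (v * 2 ^ k - s)

/-- The cross product on `ℝ³`. -/
def cross3 (x y : E3) : E3 :=
  (WithLp.equiv 2 (Fin 3 → ℝ)).symm
    ![x 1 * y 2 - x 2 * y 1, x 2 * y 0 - x 0 * y 2, x 0 * y 1 - x 1 * y 0]

/-! ### Part 1: de Casteljau algebra -/

lemma dcPt_congr {q q' : ℕ → E3} : ∀ (r i : ℕ), (∀ t, i ≤ t → t ≤ i + r → q t = q' t) →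
    dcPt q r i = dcPt q' r i := by
  intro r
  induction r with
  | zero => intro i h; exact h i le_rfl (by omega)
  | succ r ih =>
    intro i h
    simp only [dcPt]
    rw [ih i (fun t h1 h2 => h t h1 (by omega)),
      ih (i+1) (fun t h1 h2 => h t (by omega) (by omega))]

lemma dcPt_sub (q q' : ℕ → E3) : ∀ (r i : ℕ),
    dcPt (fun t => q t - q' t) r i = dcPt q r i - dcPt q' r i := by
  intro r
  induction r with
  | zero => intro i; rfl
  | succ r ih =>
    intro i
    simp only [dcPt, ih]
    module

lemma dcPt_smul (c : ℝ) (q : ℕ → E3) : ∀ (r i : ℕ),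
    dcPt (fun t => c • q t) r i = c • dcPt q r i := by
  intro r
  induction r with
  | zero => intro i; rfl
  | succ r ih =>
    intro i
    simp only [dcPt, ih]
    module

lemma dcPt_diff (q : ℕ → E3) : ∀ (r i : ℕ),
    dcPt (fun t => q (t + 1) - q t) r i = dcPt q r (i + 1) - dcPt q r i := by
  intro r
  induction r with
  | zero => intro i; rfl
  | succ r ih =>
    intro i
    simp only [dcPt, ih]
    module

lemma norm_dcPt_le {q : ℕ → E3} {B : ℝ} : ∀ (r i : ℕ), (∀ t, i ≤ t → t ≤ i + r → ‖q t‖ ≤ B) →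
    ‖dcPt q r i‖ ≤ B := by
  intro r
  induction r with
  | zero => intro i h; exact h i le_rfl (by omega)
  | succ r ih =>
    intro i h
    have h1 := ih i (fun t h1 h2 => h t h1 (by omega))
    have h2 := ih (i+1) (fun t h1 h2 => h t (by omega) (by omega))
    simp only [dcPt]
    rw [norm_smul]
    have := norm_add_le (dcPt q r i) (dcPt q r (i+1))
    have hB : (0:ℝ) ≤ B := le_trans (norm_nonneg _) h1
    simp only [norm_inv, Real.norm_ofNat]
    nlinarith [norm_nonneg (dcPt q r i + dcPt q r (i+1))]

lemma dcHalf_congr {q q' : ℕ → E3} {N side i : ℕ} (hi : i ≤ N)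
    (h : ∀ t ≤ N, q t = q' t) : dcHalf N q side i = dcHalf N q' side i := by
  unfold dcHalf
  split
  · exact dcPt_congr i 0 (fun t h1 h2 => h t (by omega))
  · exact dcPt_congr (N - i) i (fun t h1 h2 => h t (by omega))

lemma dcHalf_sub (N : ℕ) (q q' : ℕ → E3) (side i : ℕ) :
    dcHalf N (fun t => q t - q' t) side i = dcHalf N q side i - dcHalf N q' side i := by
  unfold dcHalf; split <;> rw [dcPt_sub]

lemma dcHalf_smul (N : ℕ) (c : ℝ) (q : ℕ → E3) (side i : ℕ) :
    dcHalf N (fun t => c • q t) side i = c • dcHalf N q side i := by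
  unfold dcHalf; split <;> rw [dcPt_smul]

lemma norm_dcHalf_le {q : ℕ → E3} {B : ℝ} {N side i : ℕ} (hi : i ≤ N)
    (h : ∀ t ≤ N, ‖q t‖ ≤ B) : ‖dcHalf N q side i‖ ≤ B := by
  unfold dcHalf
  split
  · exact norm_dcPt_le i 0 (fun t h1 h2 => h t (by omega))
  · exact norm_dcPt_le (N - i) i (fun t h1 h2 => h t (by omega))

lemma dcHalf_diff {N i : ℕ} (q : ℕ → E3) (side : ℕ) (hi : i < N) :
    dcHalf N q side (i + 1) - dcHalf N q side i
      = ((2:ℝ)⁻¹) • dcHalf (N - 1) (fun t => q (t + 1) - q t) side i := by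
  unfold dcHalf
  split
  · -- left: dcPt q (i+1) 0 - dcPt q i 0
    rw [dcPt_diff]
    show dcPt q (i+1) 0 - dcPt q i 0 = (2:ℝ)⁻¹ • (dcPt q i 1 - dcPt q i 0)
    simp only [dcPt]
    module
  · -- right
    have h1 : N - (i + 1) = N - 1 - i := by omega
    have h2 : N - i = (N - 1 - i) + 1 := by omega
    rw [dcPt_diff, h1, h2]
    simp only [dcPt]
    module
/-! ### Part 2: subNet / levelNet algebra -/

lemma subNet_congr {p p' : ℕ → ℕ → E3} {n m a b i j : ℕ} (hi : i ≤ n) (hj : j ≤ m)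
    (h : ∀ i' ≤ n, ∀ j' ≤ m, p i' j' = p' i' j') :
    subNet n m p a b i j = subNet n m p' a b i j := by
  unfold subNet
  exact dcHalf_congr hj (fun t ht => dcHalf_congr hi (fun t' ht' => h t' ht' t ht))

lemma norm_subNet_le {p : ℕ → ℕ → E3} {B : ℝ} {n m a b i j : ℕ} (hi : i ≤ n) (hj : j ≤ m)
    (h : ∀ i' ≤ n, ∀ j' ≤ m, ‖p i' j'‖ ≤ B) : ‖subNet n m p a b i j‖ ≤ B :=
  norm_dcHalf_le hj (fun t ht => norm_dcHalf_le hi (fun t' ht' => h t' ht' t ht))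

lemma subNet_smul (n m : ℕ) (c : ℝ) (p : ℕ → ℕ → E3) (a b i j : ℕ) :
    subNet n m (fun i' j' => c • p i' j') a b i j = c • subNet n m p a b i j := by
  unfold subNet
  have h1 : (fun j' => dcHalf n (fun i' => c • p i' j') a i)
      = fun j' => c • dcHalf n (fun i' => p i' j') a i := funext fun j' => dcHalf_smul n c _ a i
  rw [h1, dcHalf_smul]

lemma subNet_diff_u {n i : ℕ} (m : ℕ) (p : ℕ → ℕ → E3) (a b j : ℕ) (hi : i < n) :
    subNet n m p a b (i + 1) j - subNet n m p a b i j
      = ((2:ℝ)⁻¹) • subNet (n - 1) m (fun i' j' => p (i' + 1) j' - p i' j') a b i j := by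
  unfold subNet
  rw [← dcHalf_sub]
  rw [show (fun j' => dcHalf n (fun i' => p i' j') a (i+1) - dcHalf n (fun i' => p i' j') a i)
      = fun j' => (2:ℝ)⁻¹ • dcHalf (n-1) (fun i' => p (i'+1) j' - p i' j') a i from
    funext fun j' => dcHalf_diff _ a hi]
  rw [dcHalf_smul]

lemma subNet_diff_v {m j : ℕ} (n : ℕ) (p : ℕ → ℕ → E3) (a b i : ℕ) (hj : j < m) :
    subNet n m p a b i (j + 1) - subNet n m p a b i j
      = ((2:ℝ)⁻¹) • subNet n (m - 1) (fun i' j' => p i' (j' + 1) - p i' j') a b i j := by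
  unfold subNet
  rw [dcHalf_diff _ b hj]
  have h1 : (fun t => dcHalf n (fun i' => p i' (t+1)) a i - dcHalf n (fun i' => p i' t) a i)
      = fun t => dcHalf n (fun i' => p i' (t+1) - p i' t) a i :=
    funext fun t => (dcHalf_sub n _ _ a i).symm
  rw [h1]

lemma levelNet_congr {p p' : ℕ → ℕ → E3} {n m : ℕ}
    (h : ∀ i' ≤ n, ∀ j' ≤ m, p i' j' = p' i' j') :
    ∀ (k r s : ℕ), ∀ i ≤ n, ∀ j ≤ m, levelNet n m p k r s i j = levelNet n m p' k r s i j := by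
  intro k
  induction k with
  | zero => intro r s i hi j hj; exact h i hi j hj
  | succ k ih =>
    intro r s i hi j hj
    exact subNet_congr hi hj (fun i' hi' j' hj' => ih (r/2) (s/2) i' hi' j' hj')

lemma norm_levelNet_le {p : ℕ → ℕ → E3} {B : ℝ} {n m : ℕ}
    (h : ∀ i' ≤ n, ∀ j' ≤ m, ‖p i' j'‖ ≤ B) :
    ∀ (k r s : ℕ), ∀ i ≤ n, ∀ j ≤ m, ‖levelNet n m p k r s i j‖ ≤ B := by
  intro k
  induction k with
  | zero => intro r s i hi j hj; exact h i hi j hj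
  | succ k ih =>
    intro r s i hi j hj
    exact norm_subNet_le hi hj (fun i' hi' j' hj' => ih (r/2) (s/2) i' hi' j' hj')

lemma levelNet_diff_u {n : ℕ} (m : ℕ) (p : ℕ → ℕ → E3) :
    ∀ (k r s : ℕ), ∀ i < n, ∀ j ≤ m,
    levelNet n m p k r s (i + 1) j - levelNet n m p k r s i j
      = (((2:ℝ)⁻¹) ^ k) • levelNet (n - 1) m (fun i' j' => p (i' + 1) j' - p i' j') k r s i j := by
  intro k
  induction k with
  | zero => intro r s i hi j hj; simp [levelNet]
  | succ k ih =>
    intro r s i hi j hj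
    show subNet n m _ _ _ (i+1) j - subNet n m _ _ _ i j = _
    rw [subNet_diff_u m _ _ _ j hi]
    have hcong : subNet (n-1) m
        (fun i' j' => levelNet n m p k (r/2) (s/2) (i'+1) j' - levelNet n m p k (r/2) (s/2) i' j')
        (r % 2) (s % 2) i j
        = subNet (n-1) m (fun i' j' => ((2:ℝ)⁻¹ ^ k) •
            levelNet (n-1) m (fun i' j' => p (i'+1) j' - p i' j') k (r/2) (s/2) i' j')
          (r % 2) (s % 2) i j := by
      apply subNet_congr (by omega) hj
      intro i' hi' j' hj'
      exact ih (r/2) (s/2) i' (by omega) j' hj'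
    rw [hcong, subNet_smul]
    show _ = ((2:ℝ)⁻¹ ^ (k+1)) • subNet (n-1) m _ _ _ i j
    rw [pow_succ]
    module

lemma levelNet_diff_v {m : ℕ} (n : ℕ) (p : ℕ → ℕ → E3) :
    ∀ (k r s : ℕ), ∀ i ≤ n, ∀ j < m,
    levelNet n m p k r s i (j + 1) - levelNet n m p k r s i j
      = (((2:ℝ)⁻¹) ^ k) • levelNet n (m - 1) (fun i' j' => p i' (j' + 1) - p i' j') k r s i j := by
  intro k
  induction k with
  | zero => intro r s i hi j hj; simp [levelNet]
  | succ k ih =>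
    intro r s i hi j hj
    show subNet n m _ _ _ i (j+1) - subNet n m _ _ _ i j = _
    rw [subNet_diff_v n _ _ _ i hj]
    have hcong : subNet n (m-1)
        (fun i' j' => levelNet n m p k (r/2) (s/2) i' (j'+1) - levelNet n m p k (r/2) (s/2) i' j')
        (r % 2) (s % 2) i j
        = subNet n (m-1) (fun i' j' => ((2:ℝ)⁻¹ ^ k) •
            levelNet n (m-1) (fun i' j' => p i' (j'+1) - p i' j') k (r/2) (s/2) i' j')
          (r % 2) (s % 2) i j := by
      apply subNet_congr hi (by omega)
      intro i' hi' j' hj'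
      exact ih (r/2) (s/2) i' hi' j' (by omega)
    rw [hcong, subNet_smul]
    show _ = ((2:ℝ)⁻¹ ^ (k+1)) • subNet n (m-1) _ _ _ i j
    rw [pow_succ]
    module
/-! ### Part 3: explicit formulas and reparametrization -/

lemma dcPt_eq_sum (q : ℕ → E3) : ∀ (r i : ℕ), dcPt q r i
    = ∑ t ∈ Finset.range (r + 1), (((2:ℝ)⁻¹) ^ r * (r.choose t : ℝ)) • q (i + t) := by
  intro r
  induction r with
  | zero => intro i; simp [dcPt]
  | succ r ih =>
    intro i
    have key : ∀ i', (2:ℝ)⁻¹ • dcPt q r i'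
        = ∑ t ∈ Finset.range (r + 1), (((2:ℝ)⁻¹) ^ (r+1) * (r.choose t : ℝ)) • q (i' + t) := by
      intro i'
      rw [ih, Finset.smul_sum]
      refine Finset.sum_congr rfl fun t _ => ?_
      rw [smul_smul, pow_succ]
      ring_nf
    simp only [dcPt, smul_add, key]
    rw [Finset.sum_range_succ' (fun t => (((2:ℝ)⁻¹) ^ (r+1) * ((r+1).choose t : ℝ)) • q (i + t))
      (r + 1)]
    have split : ∀ t ∈ Finset.range (r + 1),
        (((2:ℝ)⁻¹) ^ (r+1) * (((r+1).choose (t+1) : ℕ) : ℝ)) • q (i + (t+1))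
        = (((2:ℝ)⁻¹) ^ (r+1) * ((r.choose (t+1) : ℕ) : ℝ)) • q (i + (t+1))
          + (((2:ℝ)⁻¹) ^ (r+1) * ((r.choose t : ℕ) : ℝ)) • q ((i+1) + t) := by
      intro t _
      have : i + 1 + t = i + (t + 1) := by omega
      rw [this, Nat.choose_succ_succ' r t]
      push_cast
      rw [← add_smul]
      ring_nf
    have left : (∑ t ∈ Finset.range (r + 1),
          (((2:ℝ)⁻¹) ^ (r+1) * ((r.choose (t+1) : ℕ) : ℝ)) • q (i + (t+1)))
        + (((2:ℝ)⁻¹) ^ (r+1) * (((r+1).choose 0 : ℕ) : ℝ)) • q (i + 0)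
        = ∑ t ∈ Finset.range (r + 1), (((2:ℝ)⁻¹) ^ (r+1) * ((r.choose t : ℕ) : ℝ)) • q (i + t) := by
      have e0 : (((2:ℝ)⁻¹) ^ (r+1) * (((r+1).choose 0 : ℕ) : ℝ)) • q (i + 0)
          = (((2:ℝ)⁻¹) ^ (r+1) * ((r.choose 0 : ℕ) : ℝ)) • q (i + 0) := by
        norm_num
      rw [e0, ← Finset.sum_range_succ'
        (fun t => (((2:ℝ)⁻¹) ^ (r+1) * ((r.choose t : ℕ) : ℝ)) • q (i + t)) (r + 1),
        Finset.sum_range_succ, Nat.choose_succ_self]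
      norm_num
    rw [Finset.sum_congr rfl split, Finset.sum_add_distrib, add_right_comm, left]

lemma scalar_id {N t : ℕ} (ht : t ≤ N) (u : ℝ) :
    ∑ i ∈ Finset.range (N + 1), bern N i u * (((2:ℝ)⁻¹) ^ i * (i.choose t : ℝ))
      = bern N t (u / 2) := by
  rw [Finset.range_eq_Ico]
  rw [← Finset.sum_Ico_consecutive _ (Nat.zero_le t) (by omega : t ≤ N + 1)]
  have h0 : ∑ i ∈ Finset.Ico 0 t, bern N i u * (((2:ℝ)⁻¹) ^ i * (i.choose t : ℝ)) = 0 := by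
    apply Finset.sum_eq_zero
    intro i hi
    simp only [Finset.mem_Ico] at hi
    rw [Nat.choose_eq_zero_of_lt hi.2]
    simp
  rw [h0, zero_add, Finset.sum_Ico_eq_sum_range]
  have hterm : ∀ w ∈ Finset.range (N + 1 - t),
      bern N (t + w) u * (((2:ℝ)⁻¹) ^ (t + w) * ((t + w).choose t : ℝ))
      = ((N.choose t : ℝ) * (u * 2⁻¹) ^ t)
        * ((u * 2⁻¹) ^ w * (1 - u) ^ (N - t - w) * ((N - t).choose w : ℝ)) := by
    intro w hw
    simp only [Finset.mem_range] at hw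
    have h1 : N.choose (t + w) * (t + w).choose t = N.choose t * (N - t).choose w := by
      have := Nat.choose_mul (n := N) (show t ≤ t + w by omega)
      simpa using this
    have h2 : N - (t + w) = N - t - w := by omega
    unfold bern
    rw [h2]
    have h1' : ((N.choose (t + w) : ℝ)) * ((t + w).choose t : ℝ)
        = (N.choose t : ℝ) * ((N - t).choose w : ℝ) := by exact_mod_cast congrArg Nat.cast h1
    rw [pow_add, pow_add, mul_pow, mul_pow]
    linear_combination h1' * (u ^ t * u ^ w * (1 - u) ^ (N - t - w) * ((2:ℝ)⁻¹) ^ t * ((2:ℝ)⁻¹) ^ w)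
  rw [Finset.sum_congr rfl hterm, ← Finset.mul_sum]
  have hN : N + 1 - t = (N - t) + 1 := by omega
  rw [hN, ← add_pow (u * 2⁻¹) (1 - u) (N - t)]
  have : u * 2⁻¹ + (1 - u) = 1 - u / 2 := by ring
  rw [this]
  unfold bern
  rw [div_eq_mul_inv]

lemma dcHalf_left_sum (N : ℕ) (q : ℕ → E3) (u : ℝ) :
    ∑ i ∈ Finset.range (N + 1), bern N i u • dcHalf N q 0 i
      = ∑ j ∈ Finset.range (N + 1), bern N j (u / 2) • q j := by
  have expand : ∀ i ∈ Finset.range (N + 1), bern N i u • dcHalf N q 0 i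
      = ∑ j ∈ Finset.range (N + 1),
          (bern N i u * (((2:ℝ)⁻¹) ^ i * (i.choose j : ℝ))) • q j := by
    intro i hi
    simp only [Finset.mem_range] at hi
    show bern N i u • dcPt q i 0 = _
    rw [dcPt_eq_sum, Finset.smul_sum]
    rw [Finset.sum_subset (Finset.range_subset_range.2 (show i + 1 ≤ N + 1 by omega))]
    · exact Finset.sum_congr rfl fun j _ => by rw [smul_smul, Nat.zero_add]
    · intro j _ hj
      simp only [Finset.mem_range, not_lt] at hj
      rw [Nat.choose_eq_zero_of_lt (by omega)]
      simp
  rw [Finset.sum_congr rfl expand, Finset.sum_comm]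
  refine Finset.sum_congr rfl fun j hj => ?_
  simp only [Finset.mem_range] at hj
  rw [← Finset.sum_smul, scalar_id (show j ≤ N by omega)]

lemma bern_symm {N i : ℕ} (hi : i ≤ N) (u : ℝ) : bern N (N - i) u = bern N i (1 - u) := by
  unfold bern
  rw [Nat.choose_symm hi, Nat.sub_sub_self hi, sub_sub_cancel]
  ring

lemma dcPt_rev {N i : ℕ} (q : ℕ → E3) (hi : i ≤ N) :
    dcPt q (N - i) i = dcPt (fun t => q (N - t)) (N - i) 0 := by
  rw [dcPt_eq_sum, dcPt_eq_sum]
  conv_rhs => rw [← Finset.sum_range_reflect]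
  refine Finset.sum_congr rfl fun t ht => ?_
  simp only [Finset.mem_range] at ht
  have h1 : N - i + 1 - 1 - t = N - i - t := by omega
  rw [h1]
  have h2 : 0 + (N - i - t) = N - i - t := by omega
  rw [h2]
  have h3 : N - (N - i - t) = i + t := by omega
  rw [h3]
  have h4 : (N - i).choose (N - i - t) = (N - i).choose t :=
    Nat.choose_symm (by omega : t ≤ N - i)
  rw [h4]
lemma dcHalf_sum (N : ℕ) (q : ℕ → E3) (side : ℕ) (u : ℝ) :
    ∑ i ∈ Finset.range (N + 1), bern N i u • dcHalf N q side i
      = ∑ j ∈ Finset.range (N + 1),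
          bern N j (((if side = 0 then (0:ℝ) else 1) + u) / 2) • q j := by
  by_cases hs : side = 0
  · subst hs
    rw [show ((if (0:ℕ) = 0 then (0:ℝ) else 1) + u) / 2 = u / 2 by norm_num]
    exact dcHalf_left_sum N q u
  · simp only [if_neg hs]
    have step1 : ∑ i ∈ Finset.range (N + 1), bern N i u • dcHalf N q side i
        = ∑ j ∈ Finset.range (N + 1), bern N j (1 - u) • dcHalf N (fun t => q (N - t)) 0 j := by
      rw [← Finset.sum_range_reflect
        (fun j => bern N j (1 - u) • dcHalf N (fun t => q (N - t)) 0 j) (N + 1)]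
      refine Finset.sum_congr rfl fun i hi => ?_
      simp only [Finset.mem_range] at hi
      show bern N i u • dcHalf N q side i
          = bern N (N - i) (1 - u) • dcHalf N (fun t => q (N - t)) 0 (N - i)
      have e1 : dcHalf N q side i = dcHalf N (fun t => q (N - t)) 0 (N - i) := by
        unfold dcHalf
        rw [if_neg hs, if_pos rfl, dcPt_rev q (by omega : i ≤ N)]
      rw [e1]
      congr 1
      rw [bern_symm (by omega : i ≤ N) (1 - u), sub_sub_cancel]
    rw [step1, dcHalf_left_sum N (fun t => q (N - t)) (1 - u)]
    rw [← Finset.sum_range_reflect (fun t => bern N t ((1 + u) / 2) • q t) (N + 1)]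
    refine Finset.sum_congr rfl fun t ht => ?_
    simp only [Finset.mem_range] at ht
    show bern N t ((1 - u) / 2) • q (N - t) = bern N (N - t) ((1 + u) / 2) • q (N - t)
    congr 1
    rw [bern_symm (by omega : t ≤ N) ((1 + u) / 2)]
    congr 1
    ring

/-- Subdivision correctness for the Bézier surface. -/
lemma bez_subNet (n m : ℕ) (p : ℕ → ℕ → E3) (a b : ℕ) (u v : ℝ) :
    bez n m (subNet n m p a b) u v
      = bez n m p (((if a = 0 then (0:ℝ) else 1) + u) / 2)
          (((if b = 0 then (0:ℝ) else 1) + v) / 2) := by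
  set ca : ℝ := ((if a = 0 then (0:ℝ) else 1) + u) / 2 with hca
  set cb : ℝ := ((if b = 0 then (0:ℝ) else 1) + v) / 2 with hcb
  unfold bez subNet
  have step1 : ∀ i ∈ Finset.range (n + 1),
      ∑ j ∈ Finset.range (m + 1), (bern n i u * bern m j v) •
          dcHalf m (fun j' => dcHalf n (fun i' => p i' j') a i) b j
        = ∑ j ∈ Finset.range (m + 1),
            (bern n i u * bern m j cb) • dcHalf n (fun i' => p i' j) a i := by
    intro i _
    have h1 : ∀ j, (bern n i u * bern m j v) •
        dcHalf m (fun j' => dcHalf n (fun i' => p i' j') a i) b j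
        = bern n i u • (bern m j v • dcHalf m (fun j' => dcHalf n (fun i' => p i' j') a i) b j) :=
      fun j => mul_smul _ _ _
    simp only [h1]
    rw [← Finset.smul_sum, dcHalf_sum m (fun j' => dcHalf n (fun i' => p i' j') a i) b v,
      Finset.smul_sum]
    exact Finset.sum_congr rfl fun j _ => (mul_smul _ _ _).symm
  rw [Finset.sum_congr rfl step1, Finset.sum_comm]
  have step2 : ∀ j ∈ Finset.range (m + 1),
      ∑ i ∈ Finset.range (n + 1), (bern n i u * bern m j cb) • dcHalf n (fun i' => p i' j) a i
        = ∑ i ∈ Finset.range (n + 1), (bern n i ca * bern m j cb) • p i j := by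
    intro j _
    have h1 : ∀ i, (bern n i u * bern m j cb) • dcHalf n (fun i' => p i' j) a i
        = bern m j cb • (bern n i u • dcHalf n (fun i' => p i' j) a i) := fun i => by
      rw [smul_smul, mul_comm]
    simp only [h1]
    rw [← Finset.smul_sum, dcHalf_sum n (fun i' => p i' j) a u, Finset.smul_sum]
    exact Finset.sum_congr rfl fun i _ => by rw [smul_smul, mul_comm]
  rw [Finset.sum_congr rfl step2, Finset.sum_comm]

/-- Reparametrization correctness for iterated subdivision. -/
lemma bez_levelNet (n m : ℕ) (p : ℕ → ℕ → E3) :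
    ∀ (k r s : ℕ), r < 2 ^ k → s < 2 ^ k → ∀ (u v : ℝ),
      bez n m (levelNet n m p k r s) u v
      = bez n m p (((r : ℝ) + u) / 2 ^ k) (((s : ℝ) + v) / 2 ^ k) := by
  intro k
  induction k with
  | zero =>
    intro r s hr hs u v
    interval_cases r
    interval_cases s
    show bez n m p u v = _
    norm_num
  | succ k ih =>
    intro r s hr hs u v
    show bez n m (subNet n m (levelNet n m p k (r / 2) (s / 2)) (r % 2) (s % 2)) u v = _
    rw [bez_subNet, ih (r / 2) (s / 2) (by omega) (by omega)]
    have harg : ∀ (r : ℕ) (u : ℝ),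
        (((r / 2 : ℕ) : ℝ) + ((if r % 2 = 0 then (0:ℝ) else 1) + u) / 2) / 2 ^ k
        = ((r : ℝ) + u) / 2 ^ (k + 1) := by
      intro r u
      have h2 : ((if r % 2 = 0 then (0:ℝ) else 1)) = ((r % 2 : ℕ) : ℝ) := by
        rcases Nat.mod_two_eq_zero_or_one r with h | h <;> simp [h]
      have h3 : ((r : ℝ)) = 2 * ((r / 2 : ℕ) : ℝ) + ((r % 2 : ℕ) : ℝ) := by
        conv_lhs => rw [← Nat.div_add_mod r 2]
        push_cast
        ring
      rw [h2, h3, pow_succ]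
      have h2k : (2:ℝ) ^ k ≠ 0 := by positivity
      field_simp
      ring
    rw [harg r u, harg s v]

lemma bern_zero_left (n i : ℕ) : bern n i 0 = if i = 0 then 1 else 0 := by
  unfold bern
  rcases Nat.eq_zero_or_pos i with h | h
  · subst h; simp
  · rw [if_neg (by omega)]
    rw [zero_pow (by omega : i ≠ 0)]
    ring

lemma bez_zero_zero (n m : ℕ) (q : ℕ → ℕ → E3) : bez n m q 0 0 = q 0 0 := by
  unfold bez
  rw [Finset.sum_eq_single 0]
  · rw [Finset.sum_eq_single 0]
    · simp [bern_zero_left]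
    · intro j _ hj
      simp [bern_zero_left, hj]
    · intro h; exact absurd (Finset.mem_range.2 (by omega)) h
  · intro i _ hi
    apply Finset.sum_eq_zero
    intro j _
    simp [bern_zero_left, hi]
  · intro h; exact absurd (Finset.mem_range.2 (by omega)) h

lemma levelNet_corner (n m : ℕ) (p : ℕ → ℕ → E3) (k r s : ℕ) (hr : r < 2 ^ k)
    (hs : s < 2 ^ k) :
    levelNet n m p k r s 0 0 = bez n m p ((r : ℝ) / 2 ^ k) ((s : ℝ) / 2 ^ k) := by
  have := bez_levelNet n m p k r s hr hs 0 0
  rw [bez_zero_zero] at this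
  rw [this]
  norm_num
/-! ### Part 4: derivative formulas -/

def bernD (n i : ℕ) (t : ℝ) : ℝ :=
  (n.choose i : ℝ) * ((i : ℝ) * t ^ (i - 1) * (1 - t) ^ (n - i)
    - (((n - i : ℕ)) : ℝ) * t ^ i * (1 - t) ^ (n - i - 1))

lemma bern_hasDerivAt (n i : ℕ) (t : ℝ) : HasDerivAt (fun t' => bern n i t') (bernD n i t) t := by
  have h1 : HasDerivAt (fun t' : ℝ => t' ^ i) ((i : ℝ) * t ^ (i - 1)) t := hasDerivAt_pow i t
  have hc : HasDerivAt (fun t' : ℝ => 1 - t') (-1) t := by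
    exact (hasDerivAt_id' t).const_sub (1:ℝ)
  have h2 : HasDerivAt (fun t' : ℝ => (1 - t') ^ (n - i))
      (-((((n - i : ℕ)) : ℝ) * (1 - t) ^ (n - i - 1))) t := by
    have := (hasDerivAt_pow (n - i) (1 - t)).comp t hc
    exact this.congr_deriv (by ring)
  have h3 := (h1.mul h2).const_mul ((n.choose i : ℕ) : ℝ)
  have heq : (fun t' => bern n i t')
      = fun t' => ((n.choose i : ℕ) : ℝ) * (t' ^ i * (1 - t') ^ (n - i)) := by
    funext x; unfold bern; ring
  rw [heq]
  refine h3.congr_deriv ?_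
  unfold bernD
  ring

lemma bernD_eq_sub (n : ℕ) (hn : 1 ≤ n) (u : ℝ) : ∀ i, bernD n i u
    = (if i = 0 then (0:ℝ) else (n : ℝ) * bern (n-1) (i-1) u) - (n : ℝ) * bern (n-1) i u := by
  intro i
  match i with
  | 0 =>
    simp only [if_pos rfl, bernD, bern]
    push_cast
    simp only [Nat.choose_zero_right, Nat.sub_zero, Nat.cast_one, pow_zero]
    ring
  | i + 1 =>
    rw [if_neg (by omega)]
    rcases le_or_gt (i + 1) n with hle | hlt
    · have hn1 : n - 1 + 1 = n := by omega
      have hA : (n : ℕ) * ((n-1).choose i) = n.choose (i+1) * (i+1) := by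
        have h0 := Nat.add_one_mul_choose_eq (n-1) i
        simp only [Nat.succ_eq_add_one, hn1] at h0
        omega
      have hB : (n : ℕ) * ((n-1).choose (i+1)) = n.choose (i+1) * (n - (i+1)) := by
        have h1 := Nat.add_one_mul_choose_eq (n-1) (i+1)
        simp only [Nat.succ_eq_add_one, hn1] at h1
        have h2 := Nat.choose_succ_right_eq n (i+1)
        omega
      have hA' : (n : ℝ) * (((n-1).choose i : ℕ) : ℝ)
          = ((n.choose (i+1) : ℕ) : ℝ) * ((i : ℝ) + 1) := by exact_mod_cast hA
      have hB' : (n : ℝ) * (((n-1).choose (i+1) : ℕ) : ℝ)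
          = ((n.choose (i+1) : ℕ) : ℝ) * (((n - (i+1) : ℕ)) : ℝ) := by exact_mod_cast hB
      unfold bernD bern
      have e1 : (i + 1) - 1 = i := by omega
      have e2 : n - 1 - i = n - (i+1) := by omega
      have e3 : n - 1 - (i + 1) = n - (i + 1) - 1 := by omega
      rw [e1, e2, e3]
      push_cast
      linear_combination hB' * (u ^ (i+1) * (1 - u) ^ (n - (i+1) - 1))
        - hA' * (u ^ i * (1 - u) ^ (n - (i+1)))
    · have hz1 : n.choose (i + 1) = 0 := Nat.choose_eq_zero_of_lt hlt
      have hz2 : (n-1).choose i = 0 := Nat.choose_eq_zero_of_lt (by omega)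
      have hz3 : (n-1).choose (i+1) = 0 := Nat.choose_eq_zero_of_lt (by omega)
      unfold bernD bern
      simp only [Nat.add_sub_cancel]
      rw [hz1, hz2, hz3]
      push_cast
      ring

lemma bernD_sum (n : ℕ) (hn : 1 ≤ n) (u : ℝ) (c : ℕ → E3) :
    ∑ i ∈ Finset.range (n + 1), bernD n i u • c i
      = ∑ i ∈ Finset.range n, bern (n-1) i u • ((n : ℝ) • (c (i+1) - c i)) := by
  have hsplit : ∀ i ∈ Finset.range (n + 1), bernD n i u • c i
      = (if i = 0 then (0:ℝ) else (n : ℝ) * bern (n-1) (i-1) u) • c i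
        - ((n : ℝ) * bern (n-1) i u) • c i := by
    intro i _
    rw [bernD_eq_sub n hn u i, sub_smul]
  rw [Finset.sum_congr rfl hsplit, Finset.sum_sub_distrib]
  have hA : ∑ i ∈ Finset.range (n + 1),
      (if i = 0 then (0:ℝ) else (n : ℝ) * bern (n-1) (i-1) u) • c i
      = ∑ i ∈ Finset.range n, ((n : ℝ) * bern (n-1) i u) • c (i+1) := by
    rw [Finset.sum_range_succ'
      (fun i => (if i = 0 then (0:ℝ) else (n : ℝ) * bern (n-1) (i-1) u) • c i) n]
    simp
  have hB : ∑ i ∈ Finset.range (n + 1), ((n : ℝ) * bern (n-1) i u) • c i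
      = ∑ i ∈ Finset.range n, ((n : ℝ) * bern (n-1) i u) • c i := by
    rw [Finset.sum_range_succ]
    have : bern (n-1) n u = 0 := by
      unfold bern
      rw [Nat.choose_eq_zero_of_lt (by omega)]
      push_cast; ring
    rw [this]
    simp
  rw [hA, hB, ← Finset.sum_sub_distrib]
  refine Finset.sum_congr rfl fun i _ => ?_
  rw [smul_smul, smul_sub, mul_comm (bern (n-1) i u) ((n:ℝ))]

lemma bez_rows (n m : ℕ) (p : ℕ → ℕ → E3) (u v : ℝ) :
    bez n m p u v = ∑ i ∈ Finset.range (n + 1),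
      bern n i u • (∑ j ∈ Finset.range (m + 1), bern m j v • p i j) := by
  unfold bez
  refine Finset.sum_congr rfl fun i _ => ?_
  rw [Finset.smul_sum]
  exact Finset.sum_congr rfl fun j _ => mul_smul _ _ _

lemma bez_cols (n m : ℕ) (p : ℕ → ℕ → E3) (u v : ℝ) :
    bez n m p u v = ∑ j ∈ Finset.range (m + 1),
      bern m j v • (∑ i ∈ Finset.range (n + 1), bern n i u • p i j) := by
  unfold bez
  rw [Finset.sum_comm]
  refine Finset.sum_congr rfl fun j _ => ?_
  rw [Finset.smul_sum]
  exact Finset.sum_congr rfl fun i _ => by rw [smul_smul, mul_comm]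

lemma hasDerivAt_bez_u (n m : ℕ) (hn : 1 ≤ n) (p : ℕ → ℕ → E3) (u v : ℝ) :
    HasDerivAt (fun u' => bez n m p u' v)
      (bez (n-1) m (fun i j => (n : ℝ) • (p (i+1) j - p i j)) u v) u := by
  have heq : (fun u' => bez n m p u' v) = fun u' => ∑ i ∈ Finset.range (n + 1),
      bern n i u' • (∑ j ∈ Finset.range (m + 1), bern m j v • p i j) := by
    funext u'; exact bez_rows n m p u' v
  rw [heq]
  have hd : HasDerivAt (fun u' => ∑ i ∈ Finset.range (n + 1),
      bern n i u' • (∑ j ∈ Finset.range (m + 1), bern m j v • p i j))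
      (∑ i ∈ Finset.range (n + 1),
        bernD n i u • (∑ j ∈ Finset.range (m + 1), bern m j v • p i j)) u :=
    HasDerivAt.fun_sum fun i _ => (bern_hasDerivAt n i u).smul_const _
  convert hd using 1
  rw [bernD_sum n hn u]
  rw [bez_rows]
  have hr : (n - 1) + 1 = n := by omega
  rw [hr]
  refine Finset.sum_congr rfl fun i _ => ?_
  congr 1
  rw [← Finset.sum_sub_distrib, Finset.smul_sum]
  refine Finset.sum_congr rfl fun j _ => ?_
  rw [← smul_sub]
  exact smul_comm _ _ _

lemma hasDerivAt_bez_v (n m : ℕ) (hm : 1 ≤ m) (p : ℕ → ℕ → E3) (u v : ℝ) :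
    HasDerivAt (fun v' => bez n m p u v')
      (bez n (m-1) (fun i j => (m : ℝ) • (p i (j+1) - p i j)) u v) v := by
  have heq : (fun v' => bez n m p u v') = fun v' => ∑ j ∈ Finset.range (m + 1),
      bern m j v' • (∑ i ∈ Finset.range (n + 1), bern n i u • p i j) := by
    funext v'; exact bez_cols n m p u v'
  rw [heq]
  have hd : HasDerivAt (fun v' => ∑ j ∈ Finset.range (m + 1),
      bern m j v' • (∑ i ∈ Finset.range (n + 1), bern n i u • p i j))
      (∑ j ∈ Finset.range (m + 1),
        bernD m j v • (∑ i ∈ Finset.range (n + 1), bern n i u • p i j)) v :=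
    HasDerivAt.fun_sum fun j _ => (bern_hasDerivAt m j v).smul_const _
  convert hd using 1
  rw [bernD_sum m hm v]
  rw [bez_cols]
  have hr : (m - 1) + 1 = m := by omega
  rw [hr]
  refine Finset.sum_congr rfl fun j _ => ?_
  congr 1
  rw [← Finset.sum_sub_distrib, Finset.smul_sum]
  refine Finset.sum_congr rfl fun i _ => ?_
  rw [← smul_sub]
  exact smul_comm _ _ _

lemma bezU_eq (n m : ℕ) (hn : 1 ≤ n) (p : ℕ → ℕ → E3) (u v : ℝ) :
    bezU n m p u v = bez (n-1) m (fun i j => (n : ℝ) • (p (i+1) j - p i j)) u v :=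
  (hasDerivAt_bez_u n m hn p u v).deriv

lemma bezV_eq (n m : ℕ) (hm : 1 ≤ m) (p : ℕ → ℕ → E3) (u v : ℝ) :
    bezV n m p u v = bez n (m-1) (fun i j => (m : ℝ) • (p i (j+1) - p i j)) u v :=
  (hasDerivAt_bez_v n m hm p u v).deriv
/-! ### Part 5: continuity, cross product, angle -/
open scoped RealInnerProductSpace

lemma continuous_bern (n i : ℕ) : Continuous (bern n i) := by
  unfold bern
  exact (continuous_const.mul (continuous_pow i)).mul
    ((continuous_const.sub continuous_id).pow _)

lemma continuous_bez (n m : ℕ) (p : ℕ → ℕ → E3) :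
    Continuous (fun w : ℝ × ℝ => bez n m p w.1 w.2) := by
  unfold bez
  refine continuous_finset_sum _ fun i _ => continuous_finset_sum _ fun j _ => ?_
  exact (((continuous_bern n i).comp continuous_fst).mul
    ((continuous_bern m j).comp continuous_snd)).smul continuous_const

lemma cross3_apply0 (x y : E3) : cross3 x y 0 = x 1 * y 2 - x 2 * y 1 := rfl
lemma cross3_apply1 (x y : E3) : cross3 x y 1 = x 2 * y 0 - x 0 * y 2 := rfl
lemma cross3_apply2 (x y : E3) : cross3 x y 2 = x 0 * y 1 - x 1 * y 0 := rfl

lemma inner3 (x y : E3) : ⟪x, y⟫ = x 0 * y 0 + x 1 * y 1 + x 2 * y 2 := by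
  simp [PiLp.inner_apply, Fin.sum_univ_three, RCLike.inner_apply, conj_trivial]
  ring

lemma E3_ext {x y : E3} (h0 : x 0 = y 0) (h1 : x 1 = y 1) (h2 : x 2 = y 2) : x = y := by
  refine PiLp.ext fun i => ?_
  fin_cases i <;> assumption

lemma cross3_smul_left (c : ℝ) (x y : E3) : cross3 (c • x) y = c • cross3 x y := by
  refine E3_ext ?_ ?_ ?_ <;>
    simp only [cross3_apply0, cross3_apply1, cross3_apply2, PiLp.smul_apply, smul_eq_mul] <;> ring

lemma cross3_smul_right (c : ℝ) (x y : E3) : cross3 x (c • y) = c • cross3 x y := by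
  refine E3_ext ?_ ?_ ?_ <;>
    simp only [cross3_apply0, cross3_apply1, cross3_apply2, PiLp.smul_apply, smul_eq_mul] <;> ring

lemma cross3_sub_left (x x' y : E3) : cross3 (x - x') y = cross3 x y - cross3 x' y := by
  refine E3_ext ?_ ?_ ?_ <;>
    simp only [cross3_apply0, cross3_apply1, cross3_apply2, PiLp.sub_apply] <;> ring

lemma cross3_sub_right (x y y' : E3) : cross3 x (y - y') = cross3 x y - cross3 x y' := by
  refine E3_ext ?_ ?_ ?_ <;>
    simp only [cross3_apply0, cross3_apply1, cross3_apply2, PiLp.sub_apply] <;> ring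

lemma cross3_add_self_right (x y : E3) : cross3 x (x + y) = cross3 x y := by
  refine E3_ext ?_ ?_ ?_ <;>
    simp only [cross3_apply0, cross3_apply1, cross3_apply2, PiLp.add_apply] <;> ring

lemma cross3_add_self_left (x y : E3) : cross3 (x + y) y = cross3 x y := by
  refine E3_ext ?_ ?_ ?_ <;>
    simp only [cross3_apply0, cross3_apply1, cross3_apply2, PiLp.add_apply] <;> ring

lemma cross3_lagrange (x y : E3) :
    ‖cross3 x y‖ ^ 2 = ‖x‖ ^ 2 * ‖y‖ ^ 2 - ⟪x, y⟫ ^ 2 := by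
  rw [← real_inner_self_eq_norm_sq, ← real_inner_self_eq_norm_sq, ← real_inner_self_eq_norm_sq]
  simp only [inner3, cross3_apply0, cross3_apply1, cross3_apply2]
  ring

lemma norm_cross3_le (x y : E3) : ‖cross3 x y‖ ≤ ‖x‖ * ‖y‖ := by
  have h := cross3_lagrange x y
  nlinarith [norm_nonneg (cross3 x y), norm_nonneg x, norm_nonneg y, sq_nonneg (⟪x, y⟫),
    mul_nonneg (norm_nonneg x) (norm_nonneg y)]

lemma cross3_ne_zero {x y : E3} (h : LinearIndependent ℝ ![x, y]) : cross3 x y ≠ 0 := by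
  rw [linearIndependent_fin2] at h
  simp only [Matrix.cons_val_one, Matrix.head_cons, Matrix.cons_val_zero] at h
  intro hc
  have hl := cross3_lagrange x y
  rw [hc, norm_zero] at hl
  have hy : ‖y‖ ≠ 0 := norm_ne_zero_iff.2 h.1
  have hy2 : (0:ℝ) < ‖y‖ ^ 2 := by positivity
  set I := ⟪x, y⟫ with hI
  have key : x = (I / ‖y‖ ^ 2) • y := by
    have hnorm : ‖x - (I / ‖y‖ ^ 2) • y‖ ^ 2 = 0 := by
      rw [← real_inner_self_eq_norm_sq, inner_sub_sub_self, real_inner_smul_left,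
        real_inner_smul_right, real_inner_smul_left, real_inner_smul_right,
        real_inner_self_eq_norm_sq, real_inner_self_eq_norm_sq]
      have hyx : ⟪y, x⟫ = I := by rw [real_inner_comm]
      rw [hyx]
      have hyy : ‖y‖ ^ 2 ≠ 0 := ne_of_gt hy2
      have e : I / ‖y‖ ^ 2 * ‖y‖ ^ 2 = I := div_mul_cancel₀ I hyy
      rw [e]
      have goal2 : ‖x‖ ^ 2 = I / ‖y‖ ^ 2 * I := by
        rw [div_mul_eq_mul_div, eq_div_iff hyy]
        nlinarith [hl]
      linarith [goal2]
    have h0 := sq_eq_zero_iff.1 hnorm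
    rw [norm_eq_zero, sub_eq_zero] at h0
    exact h0
  exact h.2 _ key.symm

lemma continuous_comp3 {f g : ℝ × ℝ → E3} (hf : Continuous f) (hg : Continuous g) :
    Continuous (fun w => cross3 (f w) (g w)) := by
  have happ : ∀ i : Fin 3, Continuous fun x : E3 => x i := fun i => PiLp.continuous_apply 2 (fun _ : Fin 3 => ℝ) i
  have h : ∀ i : Fin 3, Continuous fun w => cross3 (f w) (g w) i := by
    intro i
    fin_cases i
    · simp only [cross3_apply0]
      exact (((happ 1).comp hf).mul ((happ 2).comp hg)).sub (((happ 2).comp hf).mul ((happ 1).comp hg))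
    · simp only [cross3_apply1]
      exact (((happ 2).comp hf).mul ((happ 0).comp hg)).sub (((happ 0).comp hf).mul ((happ 2).comp hg))
    · simp only [cross3_apply2]
      exact (((happ 0).comp hf).mul ((happ 1).comp hg)).sub (((happ 1).comp hf).mul ((happ 0).comp hg))
  have : Continuous fun w => (fun i => cross3 (f w) (g w) i : Fin 3 → ℝ) := continuous_pi h
  exact (PiLp.continuous_toLp 2 (fun _ : Fin 3 => ℝ)).comp this

open InnerProductGeometry in
lemma angle_lt_of_close {ε c : ℝ} (hε : 0 < ε) (hc : 0 < c) :
    ∃ δ > 0, ∀ x y : E3, c ≤ ‖y‖ → ‖x - y‖ < δ → angle x y < ε := by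
  obtain ⟨η, hη, hcont⟩ : ∃ η > 0, ∀ t : ℝ, |t - 1| < η → |Real.arccos t - Real.arccos 1| < ε := by
    have h := Real.continuous_arccos.continuousAt (x := (1:ℝ))
    rw [Metric.continuousAt_iff] at h
    obtain ⟨η, hη, h⟩ := h ε hε
    exact ⟨η, hη, fun t ht => h (by simpa [Real.dist_eq] using ht)⟩
  refine ⟨min (c/4) (c*η/4), by positivity, fun x y hy hxy => ?_⟩
  have hd1 : ‖x - y‖ < c/4 := lt_of_lt_of_le hxy (min_le_left _ _)
  have hd2 : ‖x - y‖ < c*η/4 := lt_of_lt_of_le hxy (min_le_right _ _)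
  have hxn : c - c/4 ≤ ‖x‖ := by
    have h := norm_sub_norm_le y x
    rw [norm_sub_rev y x] at h
    linarith
  have hx0 : (0:ℝ) < ‖x‖ := by linarith
  have hy0 : (0:ℝ) < ‖y‖ := by linarith
  have hxny : ‖x‖ ≤ ‖y‖ + ‖x - y‖ := by
    have h := norm_add_le (x - y) y
    simp only [sub_add_cancel] at h
    linarith
  have hinner : ⟪x, y⟫ ≥ ‖y‖^2 - ‖x - y‖ * ‖y‖ := by
    have h1 : ⟪x - y, y⟫ = ⟪x, y⟫ - ⟪y, y⟫ := inner_sub_left x y y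
    have h2 : |⟪x - y, y⟫| ≤ ‖x - y‖ * ‖y‖ := abs_real_inner_le_norm _ _
    have h3 : ⟪y, y⟫ = ‖y‖^2 := real_inner_self_eq_norm_sq y
    nlinarith [neg_abs_le (⟪x - y, y⟫)]
  have hratio_le : ⟪x, y⟫ / (‖x‖ * ‖y‖) ≤ 1 := by
    rw [div_le_one (by positivity)]
    exact real_inner_le_norm x y
  have hratio_lo : 1 - η < ⟪x, y⟫ / (‖x‖ * ‖y‖) := by
    rw [lt_div_iff₀ (by positivity)]
    have hxy2 : ‖x‖ * ‖y‖ ≤ (‖y‖ + ‖x - y‖) * ‖y‖ := by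
      apply mul_le_mul_of_nonneg_right hxny (le_of_lt hy0)
    -- ⟪x,y⟫ ≥ ‖y‖² - d‖y‖ and (1-η)‖x‖‖y‖ ≤ (1-η)(‖y‖+d)‖y‖ ... need care with sign of 1-η
    rcases le_or_gt (1 - η) 0 with hcase | hcase
    · have : (1 - η) * (‖x‖ * ‖y‖) ≤ 0 := mul_nonpos_of_nonpos_of_nonneg hcase (by positivity)
      have hIpos : (0:ℝ) < ⟪x, y⟫ := by nlinarith
      linarith
    · have h4 : (1 - η) * (‖x‖ * ‖y‖) ≤ (1 - η) * ((‖y‖ + ‖x - y‖) * ‖y‖) :=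
        mul_le_mul_of_nonneg_left hxy2 (le_of_lt hcase)
      have h5 : η * (c * ‖y‖) ≤ η * (‖y‖ * ‖y‖) := by
        apply mul_le_mul_of_nonneg_left _ (le_of_lt hη)
        exact mul_le_mul_of_nonneg_right hy (le_of_lt hy0)
      have h6 : (0:ℝ) ≤ η * (‖x - y‖ * ‖y‖) := by positivity
      have h7 : 2 * ‖x - y‖ * ‖y‖ < η * (c * ‖y‖) := by
        have := mul_lt_mul_of_pos_right hd2 hy0
        nlinarith [hη, hy0, hc]
      nlinarith
  have habs : |⟪x, y⟫ / (‖x‖ * ‖y‖) - 1| < η := by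
    rw [abs_lt]
    constructor <;> [linarith; linarith]
  have := hcont _ habs
  rw [Real.arccos_one] at this
  have harccos_nonneg := Real.arccos_nonneg (⟪x, y⟫ / (‖x‖ * ‖y‖))
  rw [angle]
  rw [abs_lt] at this
  linarith [this.2]
/-! ### Part 6: uniform convergence of the subdivided nets -/

lemma levelNet_smul (n m : ℕ) (c : ℝ) (p : ℕ → ℕ → E3) :
    ∀ (k r s : ℕ), levelNet n m (fun i' j' => c • p i' j') k r s
      = fun i j => c • levelNet n m p k r s i j := by
  intro k
  induction k with
  | zero => intro r s; rfl
  | succ k ih =>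
    intro r s
    show subNet n m (levelNet n m (fun i' j' => c • p i' j') k (r/2) (s/2)) (r%2) (s%2) = _
    rw [ih]
    funext i j
    exact subNet_smul n m c _ (r%2) (s%2) i j

lemma exists_bound1 (g : ℕ → ℝ) (b : ℕ) : ∃ C, 0 ≤ C ∧ ∀ j ≤ b, g j ≤ C := by
  induction b with
  | zero =>
    refine ⟨max (g 0) 0, le_max_right _ _, fun j hj => ?_⟩
    interval_cases j
    exact le_max_left _ _
  | succ b ih =>
    obtain ⟨C, hC0, hC⟩ := ih
    refine ⟨max C (g (b+1)), le_trans hC0 (le_max_left _ _), fun j hj => ?_⟩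
    rcases Nat.lt_or_ge j (b+1) with h | h
    · exact le_trans (hC j (by omega)) (le_max_left _ _)
    · have hj' : j = b + 1 := by omega
      subst hj'
      exact le_max_right _ _

lemma exists_bound2 (g : ℕ → ℕ → ℝ) (a b : ℕ) :
    ∃ C, 0 ≤ C ∧ ∀ i ≤ a, ∀ j ≤ b, g i j ≤ C := by
  induction a with
  | zero =>
    obtain ⟨C, h0, h⟩ := exists_bound1 (g 0) b
    refine ⟨C, h0, fun i hi j hj => ?_⟩
    interval_cases i
    exact h j hj
  | succ a ih =>
    obtain ⟨C, hC0, hC⟩ := ih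
    obtain ⟨C', hC'0, hC'⟩ := exists_bound1 (g (a+1)) b
    refine ⟨max C C', le_trans hC0 (le_max_left _ _), fun i hi j hj => ?_⟩
    rcases Nat.lt_or_ge i (a+1) with h | h
    · exact le_trans (hC i (by omega) j hj) (le_max_left _ _)
    · have hi' : i = a + 1 := by omega
      subst hi'
      exact le_trans (hC' j hj) (le_max_right _ _)

lemma net_conv (ν μ : ℕ) (P : ℕ → ℕ → E3) :
    ∀ ε > (0:ℝ), ∃ K : ℕ, ∀ k ≥ K, ∀ r : ℕ, r < 2 ^ k → ∀ s : ℕ, s < 2 ^ k → ∀ i ≤ ν, ∀ j ≤ μ,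
      ∀ u ∈ Set.Icc ((r : ℝ) / 2 ^ k) (((r : ℝ) + 1) / 2 ^ k),
      ∀ v ∈ Set.Icc ((s : ℝ) / 2 ^ k) (((s : ℝ) + 1) / 2 ^ k),
      ‖levelNet ν μ P k r s i j - bez ν μ P u v‖ < ε := by
  intro ε hε
  -- bound on the difference nets
  obtain ⟨CU, hCU0, hCU⟩ : ∃ C, 0 ≤ C ∧ ∀ i' ≤ ν, ∀ j' ≤ μ, ‖P (i'+1) j' - P i' j'‖ ≤ C :=
    exists_bound2 (fun i' j' => ‖P (i'+1) j' - P i' j'‖) ν μ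
  obtain ⟨CV, hCV0, hCV⟩ : ∃ C, 0 ≤ C ∧ ∀ i' ≤ ν, ∀ j' ≤ μ, ‖P i' (j'+1) - P i' j'‖ ≤ C :=
    exists_bound2 (fun i' j' => ‖P i' (j'+1) - P i' j'‖) ν μ
  set A : ℝ := (ν : ℝ) * CU + (μ : ℝ) * CV + 1 with hA
  have hApos : 0 < A := by positivity
  -- uniform continuity of bez on [0,1]²
  have hcomp : IsCompact (Set.Icc (0:ℝ) 1 ×ˢ Set.Icc (0:ℝ) 1) :=
    isCompact_Icc.prod isCompact_Icc
  have hUC := hcomp.uniformContinuousOn_of_continuous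
    ((continuous_bez ν μ P).continuousOn)
  rw [Metric.uniformContinuousOn_iff] at hUC
  obtain ⟨δ, hδ, hUCd⟩ := hUC (ε/2) (by positivity)
  -- choose K
  obtain ⟨K1, hK1⟩ := exists_pow_lt_of_lt_one (show (0:ℝ) < (ε/2)/A by positivity)
    (show (1:ℝ)/2 < 1 by norm_num)
  obtain ⟨K2, hK2⟩ := exists_pow_lt_of_lt_one (show (0:ℝ) < δ by exact hδ)
    (show (1:ℝ)/2 < 1 by norm_num)
  refine ⟨max K1 K2, fun k hk r hr s hs i hi j hj u hu v hv => ?_⟩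
  have hhalf : ∀ k' k'' : ℕ, k'' ≤ k' → ((1:ℝ)/2) ^ k' ≤ ((1:ℝ)/2) ^ k'' :=
    fun k' k'' h => pow_le_pow_of_le_one (by norm_num) (by norm_num) h
  have hpk1 : ((1:ℝ)/2) ^ k < (ε/2)/A :=
    lt_of_le_of_lt (hhalf k K1 (le_trans (le_max_left _ _) hk)) hK1
  have hpk2 : ((1:ℝ)/2) ^ k < δ :=
    lt_of_le_of_lt (hhalf k K2 (le_trans (le_max_right _ _) hk)) hK2
  set q : ℕ → ℕ → E3 := levelNet ν μ P k r s with hq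
  have h2k : (0:ℝ) < 2 ^ k := by positivity
  -- (a) distance to the corner point
  have hstepU : ∀ i' < ν, ∀ j' ≤ μ, ‖q (i'+1) j' - q i' j'‖ ≤ ((1:ℝ)/2) ^ k * CU := by
    intro i' hi' j' hj'
    rw [hq, levelNet_diff_u μ P k r s i' hi' j' hj', norm_smul]
    have hb := norm_levelNet_le (n := ν - 1) (m := μ)
      (p := fun i' j' => P (i'+1) j' - P i' j') (B := CU)
      (fun i'' hi'' j'' hj'' => hCU i'' (by omega) j'' hj'') k r s i' (by omega) j' hj'
    have habs : ‖((2:ℝ)⁻¹) ^ k‖ = ((1:ℝ)/2) ^ k := by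
      rw [norm_pow, Real.norm_eq_abs, abs_of_pos (by norm_num : (0:ℝ) < 2⁻¹)]
      norm_num
    rw [habs]
    exact mul_le_mul_of_nonneg_left hb (by positivity)
  have hstepV : ∀ i' ≤ ν, ∀ j' < μ, ‖q i' (j'+1) - q i' j'‖ ≤ ((1:ℝ)/2) ^ k * CV := by
    intro i' hi' j' hj'
    rw [hq, levelNet_diff_v ν P k r s i' hi' j' hj', norm_smul]
    have hb := norm_levelNet_le (n := ν) (m := μ - 1)
      (p := fun i' j' => P i' (j'+1) - P i' j') (B := CV)
      (fun i'' hi'' j'' hj'' => hCV i'' hi'' j'' (by omega)) k r s i' hi' j' (by omega)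
    have habs : ‖((2:ℝ)⁻¹) ^ k‖ = ((1:ℝ)/2) ^ k := by
      rw [norm_pow, Real.norm_eq_abs, abs_of_pos (by norm_num : (0:ℝ) < 2⁻¹)]
      norm_num
    rw [habs]
    exact mul_le_mul_of_nonneg_left hb (by positivity)
  have htelescopeU : ‖q i 0 - q 0 0‖ ≤ (i : ℝ) * (((1:ℝ)/2) ^ k * CU) := by
    have := Finset.sum_range_sub (fun i' => q i' 0) i
    rw [← this]
    refine le_trans (norm_sum_le _ _) ?_
    have hbound : ∀ i' ∈ Finset.range i, ‖q (i'+1) 0 - q i' 0‖ ≤ ((1:ℝ)/2) ^ k * CU := by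
      intro i' hi'
      simp only [Finset.mem_range] at hi'
      exact hstepU i' (by omega) 0 (by omega)
    calc ∑ i' ∈ Finset.range i, ‖q (i'+1) 0 - q i' 0‖
        ≤ ∑ _i' ∈ Finset.range i, ((1:ℝ)/2) ^ k * CU := Finset.sum_le_sum hbound
      _ = (i : ℝ) * (((1:ℝ)/2) ^ k * CU) := by
          rw [Finset.sum_const, Finset.card_range, nsmul_eq_mul]
  have htelescopeV : ‖q i j - q i 0‖ ≤ (j : ℝ) * (((1:ℝ)/2) ^ k * CV) := by
    have := Finset.sum_range_sub (fun j' => q i j') j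
    rw [← this]
    refine le_trans (norm_sum_le _ _) ?_
    have hbound : ∀ j' ∈ Finset.range j, ‖q i (j'+1) - q i j'‖ ≤ ((1:ℝ)/2) ^ k * CV := by
      intro j' hj'
      simp only [Finset.mem_range] at hj'
      exact hstepV i hi j' (by omega)
    calc ∑ j' ∈ Finset.range j, ‖q i (j'+1) - q i j'‖
        ≤ ∑ _j' ∈ Finset.range j, ((1:ℝ)/2) ^ k * CV := Finset.sum_le_sum hbound
      _ = (j : ℝ) * (((1:ℝ)/2) ^ k * CV) := by
          rw [Finset.sum_const, Finset.card_range, nsmul_eq_mul]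
  have hcornerdist : ‖q i j - q 0 0‖ ≤ ((1:ℝ)/2) ^ k * ((ν : ℝ) * CU + (μ : ℝ) * CV) := by
    have h1 : ‖q i j - q 0 0‖ ≤ ‖q i j - q i 0‖ + ‖q i 0 - q 0 0‖ := norm_sub_le_norm_sub_add_norm_sub _ _ _
    have h2 : (i : ℝ) ≤ (ν : ℝ) := by exact_mod_cast hi
    have h3 : (j : ℝ) ≤ (μ : ℝ) := by exact_mod_cast hj
    have h4 : (0:ℝ) ≤ ((1:ℝ)/2) ^ k := by positivity
    nlinarith [htelescopeU, htelescopeV, mul_nonneg h4 hCU0, mul_nonneg h4 hCV0]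
  -- (b) corner equals surface value
  have hcorner : q 0 0 = bez ν μ P ((r : ℝ) / 2 ^ k) ((s : ℝ) / 2 ^ k) :=
    levelNet_corner ν μ P k r s hr hs
  -- (c) surface values are close
  have hmemC : ((r : ℝ) / 2 ^ k, (s : ℝ) / 2 ^ k) ∈ Set.Icc (0:ℝ) 1 ×ˢ Set.Icc (0:ℝ) 1 := by
    constructor <;> constructor
    · positivity
    · rw [div_le_one h2k]
      have : (r : ℝ) ≤ 2 ^ k - 1 := by
        have : (r : ℝ) + 1 ≤ 2 ^ k := by exact_mod_cast Nat.succ_le_of_lt hr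
        linarith
      linarith
    · positivity
    · rw [div_le_one h2k]
      have : (s : ℝ) + 1 ≤ 2 ^ k := by exact_mod_cast Nat.succ_le_of_lt hs
      linarith
  have hmemUV : (u, v) ∈ Set.Icc (0:ℝ) 1 ×ˢ Set.Icc (0:ℝ) 1 := by
    obtain ⟨hu1, hu2⟩ := hu
    obtain ⟨hv1, hv2⟩ := hv
    have hr1 : (r : ℝ) + 1 ≤ 2 ^ k := by exact_mod_cast Nat.succ_le_of_lt hr
    have hs1 : (s : ℝ) + 1 ≤ 2 ^ k := by exact_mod_cast Nat.succ_le_of_lt hs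
    constructor <;> constructor
    · exact le_trans (by positivity) hu1
    · exact le_trans hu2 (by rw [div_le_one h2k]; linarith)
    · exact le_trans (by positivity) hv1
    · exact le_trans hv2 (by rw [div_le_one h2k]; linarith)
  have haux : ∀ (a u' : ℝ), a ≤ u' → u' ≤ a + 1 / 2 ^ k → dist a u' < δ := by
    intro a u' h1 h2
    rw [Real.dist_eq, abs_lt]
    have hp : (1:ℝ) / 2 ^ k = ((1:ℝ)/2) ^ k := by rw [div_pow, one_pow]
    constructor
    · rw [hp] at h2
      linarith
    · linarith
  have hdist : dist ((r : ℝ) / 2 ^ k, (s : ℝ) / 2 ^ k) (u, v) < δ := by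
    rw [Prod.dist_eq]
    apply max_lt
    · exact haux _ u hu.1 (by rw [add_div] at hu; exact hu.2)
    · exact haux _ v hv.1 (by rw [add_div] at hv; exact hv.2)
  have hbezclose : ‖bez ν μ P ((r : ℝ) / 2 ^ k) ((s : ℝ) / 2 ^ k) - bez ν μ P u v‖ < ε / 2 := by
    have := hUCd _ hmemC _ hmemUV hdist
    rw [dist_eq_norm] at this
    exact this
  have hmain : ‖q i j - bez ν μ P u v‖
      ≤ ‖q i j - q 0 0‖ + ‖q 0 0 - bez ν μ P u v‖ :=
    norm_sub_le_norm_sub_add_norm_sub _ _ _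
  have hfin1 : ‖q 0 0 - bez ν μ P u v‖ < ε / 2 := by
    rw [hcorner]
    exact hbezclose
  have hfin2 : ‖q i j - q 0 0‖ < ε / 2 := by
    have h1 : ((1:ℝ)/2) ^ k * ((ν : ℝ) * CU + (μ : ℝ) * CV) ≤ ((1:ℝ)/2) ^ k * A := by
      apply mul_le_mul_of_nonneg_left _ (by positivity)
      rw [hA]
      linarith
    have h2 : ((1:ℝ)/2) ^ k * A < (ε/2) / A * A :=
      mul_lt_mul_of_pos_right hpk1 hApos
    have h3 : (ε/2) / A * A = ε / 2 := div_mul_cancel₀ _ (ne_of_gt hApos)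
    linarith [hcornerdist]
  linarith
set_option maxHeartbeats 1000000
open InnerProductGeometry in
/-- If the Bézier surface is regular then, under subdivision, the tangent
and normal directions of the control surfaces converge to those of `b`: for every `ε > 0`
there is `K` such that for all `k ≥ K`, each dyadic subsquare `S` (index `(r,s)`,
`r, s < 2ᵏ`), each triangle of the level-`k` control surface with parameter triangle in `S`
(cell `(i,j)`, lower or upper triangle of the corresponding net `q`), and each `(u,v) ∈ S`:
the angle between the (counterclockwise-oriented) normal of the triangle and the normal
`b_u × b_v` of `b` at `(u,v)` is `< ε`, and the angle between each `u`-adjacent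
(resp. `v`-adjacent) edge of the triangle and `b_u(u,v)` (resp. `b_v(u,v)`) is `< ε`. -/
theorem ctrlSurfK_normals_tangents_converge (n m : ℕ) (hn : 1 ≤ n) (hm : 1 ≤ m)
    (p : ℕ → ℕ → E3) (hreg : Regular n m p) :
    ∀ ε > (0:ℝ), ∃ K : ℕ, ∀ k ≥ K, ∀ r : ℕ, r < 2 ^ k → ∀ s : ℕ, s < 2 ^ k → ∀ i < n, ∀ j < m,
      ∀ u ∈ Set.Icc ((r : ℝ) / 2 ^ k) (((r : ℝ) + 1) / 2 ^ k),
      ∀ v ∈ Set.Icc ((s : ℝ) / 2 ^ k) (((s : ℝ) + 1) / 2 ^ k),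
        let q := levelNet n m p k r s
        -- lower triangle `q i j, q (i+1) j, q (i+1) (j+1)`
        (angle (cross3 (q (i+1) j - q i j) (q (i+1) (j+1) - q i j))
            (cross3 (bezU n m p u v) (bezV n m p u v)) < ε ∧
         angle (q (i+1) j - q i j) (bezU n m p u v) < ε ∧
         angle (q (i+1) (j+1) - q (i+1) j) (bezV n m p u v) < ε) ∧
        -- upper triangle `q i j, q i (j+1), q (i+1) (j+1)`
        (angle (cross3 (q (i+1) (j+1) - q i j) (q i (j+1) - q i j))
            (cross3 (bezU n m p u v) (bezV n m p u v)) < ε ∧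
         angle (q (i+1) (j+1) - q i (j+1)) (bezU n m p u v) < ε ∧
         angle (q i (j+1) - q i j) (bezV n m p u v) < ε) := by

  intro ε hε
  classical
  have hn0 : (0:ℝ) < (n:ℝ) := by exact_mod_cast hn
  have hm0 : (0:ℝ) < (m:ℝ) := by exact_mod_cast hm
  set PU : ℕ → ℕ → E3 := fun i j => (n : ℝ) • (p (i+1) j - p i j) with hPU
  set PV : ℕ → ℕ → E3 := fun i j => (m : ℝ) • (p i (j+1) - p i j) with hPV
  have hU : ∀ u v : ℝ, bezU n m p u v = bez (n-1) m PU u v := fun u v => bezU_eq n m hn p u v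
  have hV : ∀ u v : ℝ, bezV n m p u v = bez n (m-1) PV u v := fun u v => bezV_eq n m hm p u v
  set S : Set (ℝ × ℝ) := Set.Icc (0:ℝ) 1 ×ˢ Set.Icc (0:ℝ) 1 with hS
  have hScomp : IsCompact S := isCompact_Icc.prod isCompact_Icc
  have hSne : S.Nonempty := ⟨(0,0), ⟨le_refl 0, zero_le_one⟩, ⟨le_refl 0, zero_le_one⟩⟩
  have hFUc : Continuous (fun w : ℝ × ℝ => bez (n-1) m PU w.1 w.2) := continuous_bez _ _ _
  have hFVc : Continuous (fun w : ℝ × ℝ => bez n (m-1) PV w.1 w.2) := continuous_bez _ _ _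
  have hNc : Continuous (fun w : ℝ × ℝ => cross3 (bez (n-1) m PU w.1 w.2) (bez n (m-1) PV w.1 w.2)) :=
    continuous_comp3 hFUc hFVc
  have hreg' : ∀ w ∈ S, LinearIndependent ℝ ![bez (n-1) m PU w.1 w.2, bez n (m-1) PV w.1 w.2] := by
    intro w hw
    have h := hreg w.1 hw.1 w.2 hw.2
    rwa [hU, hV] at h
  have hUne : ∀ w ∈ S, bez (n-1) m PU w.1 w.2 ≠ 0 := by
    intro w hw
    have h := (linearIndependent_fin2.1 (hreg' w hw))
    simp only [Matrix.cons_val_one, Matrix.head_cons, Matrix.cons_val_zero] at h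
    intro h0
    exact h.2 0 (by rw [zero_smul, h0])
  have hVne : ∀ w ∈ S, bez n (m-1) PV w.1 w.2 ≠ 0 := by
    intro w hw
    have h := (linearIndependent_fin2.1 (hreg' w hw))
    simp only [Matrix.cons_val_one, Matrix.head_cons, Matrix.cons_val_zero] at h
    exact h.1
  have hNne : ∀ w ∈ S, cross3 (bez (n-1) m PU w.1 w.2) (bez n (m-1) PV w.1 w.2) ≠ 0 :=
    fun w hw => cross3_ne_zero (hreg' w hw)
  -- minima
  obtain ⟨w1, hw1S, hw1⟩ := hScomp.exists_isMinOn hSne hFUc.norm.continuousOn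
  obtain ⟨w2, hw2S, hw2⟩ := hScomp.exists_isMinOn hSne hFVc.norm.continuousOn
  obtain ⟨w3, hw3S, hw3⟩ := hScomp.exists_isMinOn hSne hNc.norm.continuousOn
  obtain ⟨w4, hw4S, hw4⟩ := hScomp.exists_isMaxOn hSne hFUc.norm.continuousOn
  obtain ⟨w5, hw5S, hw5⟩ := hScomp.exists_isMaxOn hSne hFVc.norm.continuousOn
  set cU : ℝ := ‖bez (n-1) m PU w1.1 w1.2‖ with hcU
  set cV : ℝ := ‖bez n (m-1) PV w2.1 w2.2‖ with hcV
  set cN : ℝ := ‖cross3 (bez (n-1) m PU w3.1 w3.2) (bez n (m-1) PV w3.1 w3.2)‖ with hcN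
  set MU : ℝ := ‖bez (n-1) m PU w4.1 w4.2‖ with hMU
  set MV : ℝ := ‖bez n (m-1) PV w5.1 w5.2‖ with hMV
  have hcUpos : 0 < cU := norm_pos_iff.2 (hUne w1 hw1S)
  have hcVpos : 0 < cV := norm_pos_iff.2 (hVne w2 hw2S)
  have hcNpos : 0 < cN := norm_pos_iff.2 (hNne w3 hw3S)
  have hMU0 : 0 ≤ MU := norm_nonneg _
  have hMV0 : 0 ≤ MV := norm_nonneg _
  set c : ℝ := min cU (min cV cN) with hcdef
  have hcpos : 0 < c := lt_min hcUpos (lt_min hcVpos hcNpos)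
  obtain ⟨δa, hδa, hang⟩ := angle_lt_of_close hε hcpos
  set D : ℝ := MU + MV + 1 with hD
  have hDpos : 0 < D := by rw [hD]; linarith
  set δ' : ℝ := min (min 1 δa) (δa / (2*D)) with hδ'def
  have hδ'pos : 0 < δ' := lt_min (lt_min one_pos hδa) (div_pos hδa (by linarith))
  have hδ'le1 : δ' ≤ 1 := le_trans (min_le_left _ _) (min_le_left _ _)
  have hδ'leδa : δ' ≤ δa := le_trans (min_le_left _ _) (min_le_right _ _)
  have hδ'leD : δ' ≤ δa / (2*D) := min_le_right _ _
  obtain ⟨K1, hK1⟩ := net_conv (n-1) m PU δ' hδ'pos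
  obtain ⟨K2, hK2⟩ := net_conv n (m-1) PV δ' hδ'pos
  refine ⟨max K1 K2, fun k hk r hr s hs i hi j hj u hu v hv => ?_⟩
  intro q
  have hq : q = levelNet n m p k r s := rfl
  -- membership of (u,v) in S
  have h2k : (0:ℝ) < 2 ^ k := by positivity
  have hr1 : (r : ℝ) + 1 ≤ 2 ^ k := by exact_mod_cast Nat.succ_le_of_lt hr
  have hs1 : (s : ℝ) + 1 ≤ 2 ^ k := by exact_mod_cast Nat.succ_le_of_lt hs
  have hwS : (u, v) ∈ S := by
    constructor <;> constructor
    · exact le_trans (by positivity) hu.1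
    · exact le_trans hu.2 (by rw [div_le_one h2k]; linarith)
    · exact le_trans (by positivity) hv.1
    · exact le_trans hv.2 (by rw [div_le_one h2k]; linarith)
  -- bounds at (u,v)
  have hFUlo : c ≤ ‖bez (n-1) m PU u v‖ := by
    refine le_trans (min_le_left _ _) ?_
    simpa using isMinOn_iff.1 hw1 (u, v) hwS
  have hFVlo : c ≤ ‖bez n (m-1) PV u v‖ := by
    refine le_trans (le_trans (min_le_right _ _) (min_le_left _ _)) ?_
    simpa using isMinOn_iff.1 hw2 (u, v) hwS
  have hNlo : c ≤ ‖cross3 (bez (n-1) m PU u v) (bez n (m-1) PV u v)‖ := by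
    refine le_trans (le_trans (min_le_right _ _) (min_le_right _ _)) ?_
    simpa using isMinOn_iff.1 hw3 (u, v) hwS
  have hFUhi : ‖bez (n-1) m PU u v‖ ≤ MU := by
    simpa using isMaxOn_iff.1 hw4 (u, v) hwS
  have hFVhi : ‖bez n (m-1) PV u v‖ ≤ MV := by
    simpa using isMaxOn_iff.1 hw5 (u, v) hwS
  -- difference identities
  have hcu : (0:ℝ) < ((n:ℝ) * 2 ^ k)⁻¹ := inv_pos.2 (mul_pos hn0 h2k)
  have hcv : (0:ℝ) < ((m:ℝ) * 2 ^ k)⁻¹ := inv_pos.2 (mul_pos hm0 h2k)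
  have hdiffU : ∀ i' < n, ∀ j' ≤ m, q (i'+1) j' - q i' j'
      = (((n:ℝ) * 2 ^ k)⁻¹) • levelNet (n-1) m PU k r s i' j' := by
    intro i' hi' j' hj'
    rw [hq, levelNet_diff_u m p k r s i' hi' j' hj']
    have h2 : levelNet (n-1) m PU k r s
        = fun a b => (n:ℝ) • levelNet (n-1) m (fun i j => p (i+1) j - p i j) k r s a b :=
      levelNet_smul (n-1) m ((n:ℝ)) (fun i j => p (i+1) j - p i j) k r s
    rw [h2]
    rw [smul_smul]
    congr 1
    rw [inv_pow, mul_inv]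
    field_simp
  have hdiffV : ∀ i' ≤ n, ∀ j' < m, q i' (j'+1) - q i' j'
      = (((m:ℝ) * 2 ^ k)⁻¹) • levelNet n (m-1) PV k r s i' j' := by
    intro i' hi' j' hj'
    rw [hq, levelNet_diff_v n p k r s i' hi' j' hj']
    have h2 : levelNet n (m-1) PV k r s
        = fun a b => (m:ℝ) • levelNet n (m-1) (fun i j => p i (j+1) - p i j) k r s a b :=
      levelNet_smul n (m-1) ((m:ℝ)) (fun i j => p i (j+1) - p i j) k r s
    rw [h2]
    rw [smul_smul]
    congr 1
    rw [inv_pow, mul_inv]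
    field_simp
  -- closeness of the scaled difference nets
  have kU : ∀ i' ≤ n - 1, ∀ j' ≤ m,
      ‖levelNet (n-1) m PU k r s i' j' - bez (n-1) m PU u v‖ < δ' :=
    fun i' hi' j' hj' => hK1 k (le_trans (le_max_left _ _) hk) r hr s hs i' hi' j' hj' u hu v hv
  have kV : ∀ i' ≤ n, ∀ j' ≤ m - 1,
      ‖levelNet n (m-1) PV k r s i' j' - bez n (m-1) PV u v‖ < δ' :=
    fun i' hi' j' hj' => hK2 k (le_trans (le_max_right _ _) hk) r hr s hs i' hi' j' hj' u hu v hv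
  -- cross products of close vectors are close
  have crossclose : ∀ X Y : E3, ‖X - bez (n-1) m PU u v‖ < δ' → ‖Y - bez n (m-1) PV u v‖ < δ' →
      ‖cross3 X Y - cross3 (bez (n-1) m PU u v) (bez n (m-1) PV u v)‖ < δa := by
    intro X Y hX hY
    have key : cross3 X Y - cross3 (bez (n-1) m PU u v) (bez n (m-1) PV u v)
        = cross3 (X - bez (n-1) m PU u v) Y
          + cross3 (bez (n-1) m PU u v) (Y - bez n (m-1) PV u v) := by
      rw [cross3_sub_left, cross3_sub_right]
      abel
    rw [key]
    have h1 : ‖cross3 (X - bez (n-1) m PU u v) Y‖ ≤ δ' * (MV + 1) := by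
      refine le_trans (norm_cross3_le _ _) ?_
      have hYn : ‖Y‖ ≤ MV + 1 := by
        have := norm_add_le (Y - bez n (m-1) PV u v) (bez n (m-1) PV u v)
        simp only [sub_add_cancel] at this
        linarith
      have := mul_le_mul hX.le hYn (norm_nonneg _) hδ'pos.le
      linarith [this]
    have h2 : ‖cross3 (bez (n-1) m PU u v) (Y - bez n (m-1) PV u v)‖ ≤ MU * δ' := by
      refine le_trans (norm_cross3_le _ _) ?_
      exact mul_le_mul hFUhi hY.le (norm_nonneg _) hMU0
    have h3 : δ' * (MV + 1) + MU * δ' = δ' * D := by rw [hD]; ring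
    have h4 : δ' * D ≤ δa / (2*D) * D := mul_le_mul_of_nonneg_right hδ'leD hDpos.le
    have h5 : δa / (2*D) * D = δa / 2 := by field_simp
    calc ‖cross3 (X - bez (n-1) m PU u v) Y
          + cross3 (bez (n-1) m PU u v) (Y - bez n (m-1) PV u v)‖
        ≤ ‖cross3 (X - bez (n-1) m PU u v) Y‖
          + ‖cross3 (bez (n-1) m PU u v) (Y - bez n (m-1) PV u v)‖ := norm_add_le _ _
      _ ≤ δ' * (MV + 1) + MU * δ' := add_le_add h1 h2
      _ < δa := by rw [h3]; linarith [h4, h5, hδa]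
  -- abbreviations for the four relevant scaled-difference values
  have hX1 := kU i (by omega) j (by omega)
  have hX2 := kU i (by omega) (j+1) (by omega)
  have hY0 := kV i (by omega) j (by omega)
  have hY1 := kV (i+1) (by omega) j (by omega)
  -- tangent-angle helper
  have tangU : ∀ i' ≤ n - 1, ∀ j' ≤ m,
      angle (levelNet (n-1) m PU k r s i' j') (bez (n-1) m PU u v) < ε :=
    fun i' hi' j' hj' => hang _ _ hFUlo (lt_of_lt_of_le (kU i' hi' j' hj') hδ'leδa)
  have tangV : ∀ i' ≤ n, ∀ j' ≤ m - 1,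
      angle (levelNet n (m-1) PV k r s i' j') (bez n (m-1) PV u v) < ε :=
    fun i' hi' j' hj' => hang _ _ hFVlo (lt_of_lt_of_le (kV i' hi' j' hj') hδ'leδa)
  rw [hU u v, hV u v]
  have e1 : q (i+1) j - q i j
      = (((n:ℝ) * 2 ^ k)⁻¹) • levelNet (n-1) m PU k r s i j := hdiffU i hi j (by omega)
  have e2 : q (i+1) (j+1) - q i (j+1)
      = (((n:ℝ) * 2 ^ k)⁻¹) • levelNet (n-1) m PU k r s i (j+1) := hdiffU i hi (j+1) (by omega)
  have e3 : q i (j+1) - q i j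
      = (((m:ℝ) * 2 ^ k)⁻¹) • levelNet n (m-1) PV k r s i j := hdiffV i (by omega) j hj
  have e4 : q (i+1) (j+1) - q (i+1) j
      = (((m:ℝ) * 2 ^ k)⁻¹) • levelNet n (m-1) PV k r s (i+1) j := hdiffV (i+1) (by omega) j hj
  refine ⟨⟨?_, ?_, ?_⟩, ⟨?_, ?_, ?_⟩⟩
  · -- lower triangle normal
    have esplit : q (i+1) (j+1) - q i j = (q (i+1) j - q i j) + (q (i+1) (j+1) - q (i+1) j) := by
      abel
    rw [esplit, cross3_add_self_right, e1, e4, cross3_smul_left, cross3_smul_right,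
      angle_smul_left_of_pos _ _ hcu, angle_smul_left_of_pos _ _ hcv]
    exact hang _ _ hNlo (crossclose _ _ hX1 hY1)
  · -- lower triangle u-edge
    rw [e1, angle_smul_left_of_pos _ _ hcu]
    exact tangU i (by omega) j (by omega)
  · -- lower triangle v-edge
    rw [e4, angle_smul_left_of_pos _ _ hcv]
    exact tangV (i+1) (by omega) j (by omega)
  · -- upper triangle normal
    have esplit : q (i+1) (j+1) - q i j = (q (i+1) (j+1) - q i (j+1)) + (q i (j+1) - q i j) := by
      abel
    rw [esplit, cross3_add_self_left, e2, e3, cross3_smul_left, cross3_smul_right,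
      angle_smul_left_of_pos _ _ hcu, angle_smul_left_of_pos _ _ hcv]
    exact hang _ _ hNlo (crossclose _ _ hX2 hY0)
  · -- upper triangle u-edge
    rw [e2, angle_smul_left_of_pos _ _ hcu]
    exact tangU i (by omega) (j+1) (by omega)
  · -- upper triangle v-edge
    rw [e3, angle_smul_left_of_pos _ _ hcv]
    exact tangV i (by omega) j (by omega)
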